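/- arXiv:1407.2745 — 2 statements merged into one kernel-verified Lean document; each statement's English description precedes it below -/
import Mathlib

section
/- Let J be a small category and F : J ⥤ Locale a diagram such that for every object j the frame underlying F(j) is a Stone frame: its top element is a compact element, and every element is the join of the complemented elements below it. If c is a limit cone over F in Locale, then the frame underlying the apex of c is again a Stone frame. -/
open CategoryTheory CategoryTheory.Limits

/-- A *Stone frame*: the top element is a compact element, and every element is the join of
the complemented elements below it. -/
def IsStoneFrame (L : Type*) [Order.Frame L] : Prop :=
  IsCompactElement (⊤ : L) ∧
  ∀ a : L, a = sSup {b | b ≤ a ∧ ∃ b', b ⊓ b' = ⊥ ∧ b ⊔ b' = ⊤}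

/-!
The ideals of the Boolean algebra of complemented elements of a frame `L` form a Stone frame, and
taking joins is a frame homomorphism from it onto `L`. A frame homomorphism `f : K → L` out of a
Stone frame lifts through this map, via `a ↦ {c | c ≤ f b for some complemented b ≤ a}`; the lift
preserves joins and is compatible with precomposition because complemented elements of a Stone
frame are compact. Lifting the legs of a limit cone of Stone locales gives a new cone, so the
universal property yields a frame homomorphism from the apex frame into the ideal frame, which
the join map retracts. A retract of a Stone frame along frame homomorphisms is a Stone frame.
-/

theorem isComplemented_iff_exists_inf_eq_bot_sup_eq_top {α : Type*} [Lattice α]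
    [BoundedOrder α] {b : α} : IsComplemented b ↔ ∃ b', b ⊓ b' = ⊥ ∧ b ⊔ b' = ⊤ := by
  simp only [IsComplemented, isCompl_iff, disjoint_iff, codisjoint_iff]

theorem IsComplemented.map {α β F : Type*} [Lattice α] [BoundedOrder α] [Lattice β]
    [BoundedOrder β] [FunLike F α β] [BoundedLatticeHomClass F α β] (f : F) {a : α}
    (ha : IsComplemented a) : IsComplemented (f a) :=
  let ⟨b, hab⟩ := ha
  ⟨f b, hab.map f⟩

section Frame

variable {L M : Type*} [Order.Frame L] [Order.Frame M]

theorem isStoneFrame_iff : IsStoneFrame L ↔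
    IsCompactElement (⊤ : L) ∧ ∀ a : L, a = sSup {b | b ≤ a ∧ IsComplemented b} := by
  simp only [IsStoneFrame, isComplemented_iff_exists_inf_eq_bot_sup_eq_top]

theorem IsStoneFrame.sSup_isComplemented_le_eq (hL : IsStoneFrame L) (a : L) :
    sSup {b | b ≤ a ∧ IsComplemented b} = a :=
  ((isStoneFrame_iff.1 hL).2 a).symm

theorem IsComplemented.isCompactElement (htop : IsCompactElement (⊤ : L)) {b : L}
    (hb : IsComplemented b) : IsCompactElement b := by
  obtain ⟨b', hbb'⟩ := hb
  rw [CompleteLattice.isCompactElement_iff_le_of_directed_sSup_le] at htop ⊢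
  intro s hne hdir hle
  have hdir' : DirectedOn (· ≤ ·) ((· ⊔ b') '' s) :=
    directedOn_image.2 (hdir.mono fun _ _ h => sup_le_sup_right h b')
  have hcover : ⊤ ≤ sSup ((· ⊔ b') '' s) := by
    rw [← hbb'.sup_eq_top, sSup_image, ← biSup_sup hne, ← sSup_eq_iSup]
    exact sup_le_sup_right hle b'
  obtain ⟨_, ⟨x, hxs, rfl⟩, hx⟩ := htop _ (hne.image _) hdir' hcover
  refine ⟨x, hxs, ?_⟩
  calc b = b ⊓ (x ⊔ b') := (inf_eq_left.2 (le_top.trans hx)).symm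
    _ = b ⊓ x := by rw [inf_sup_left, hbb'.inf_eq_bot, sup_bot_eq]
    _ ≤ x := inf_le_right

theorem IsStoneFrame.of_leftInverse (hM : IsStoneFrame M) (h : FrameHom L M)
    (r : FrameHom M L) (hr : Function.LeftInverse r h) : IsStoneFrame L := by
  rw [isStoneFrame_iff] at hM ⊢
  refine ⟨?_, fun a => le_antisymm ?_ (sSup_le fun _ hb => hb.1)⟩
  · have htop := hM.1
    rw [CompleteLattice.isCompactElement_iff_le_of_directed_sSup_le] at htop ⊢
    intro s hne hdir hle
    have hle' : ⊤ ≤ sSup (h '' s) := by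
      rw [← map_sSup, ← map_top h]
      exact OrderHomClass.mono h hle
    obtain ⟨_, ⟨x, hxs, rfl⟩, hx⟩ := htop _ (hne.image h)
      (directedOn_image.2 (hdir.mono fun _ _ hxy => OrderHomClass.mono h hxy)) hle'
    exact ⟨x, hxs, by simpa [hr x] using OrderHomClass.mono r hx⟩
  · calc a = r (h a) := (hr a).symm
      _ = sSup (r '' {B | B ≤ h a ∧ IsComplemented B}) := by rw [← map_sSup, ← hM.2]
      _ ≤ _ := by
        refine sSup_le_sSup ?_
        rintro _ ⟨B, ⟨hBa, B', hBB'⟩, rfl⟩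
        exact ⟨(OrderHomClass.mono r hBa).trans (hr a).le, r B', hBB'.map r⟩

end Frame

namespace Order.Ideal

variable {P : Type*}

section SemilatticeSup

variable [SemilatticeSup P] [OrderBot P]

theorem mem_sSup_iff {S : Set (Ideal P)} {x : P} :
    x ∈ sSup S ↔ ∃ t : Finset P, ↑t ⊆ ⋃ I ∈ S, (I : Set P) ∧ x ≤ t.sup id := by
  classical
  constructor
  · intro hx
    let U : Set P := {x | ∃ t : Finset P, ↑t ⊆ ⋃ I ∈ S, (I : Set P) ∧ x ≤ t.sup id}
    have hU : IsIdeal U := by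
      refine ⟨fun a b hba ⟨t, ht, hat⟩ => ⟨t, ht, hba.trans hat⟩, ⟨⊥, ∅, by simp, bot_le⟩,
        SupClosed.directedOn ?_⟩
      rintro a ⟨t, ht, hat⟩ b ⟨u, hu, hbu⟩
      refine ⟨t ∪ u, ?_, ?_⟩
      · rw [Finset.coe_union]
        exact Set.union_subset ht hu
      · rw [Finset.sup_union]
        exact sup_le_sup hat hbu
    have hSU : sSup S ≤ hU.toIdeal :=
      sSup_le fun I hI y hy => ⟨{y}, by simpa using Set.mem_biUnion hI hy, by simp⟩
    exact hSU hx
  · rintro ⟨t, ht, hxt⟩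
    refine (sSup S).lower hxt ((finsetSup_mem_iff _).2 fun y hy => ?_)
    obtain ⟨I, hI, hyI⟩ := Set.mem_iUnion₂.1 (ht hy)
    exact le_sSup hI hyI

theorem isCompactElement_principal (x : P) : IsCompactElement (principal x) := by
  rw [CompleteLattice.isCompactElement_iff_le_of_directed_sSup_le]
  intro S hne hdir hle
  obtain ⟨t, ht, hxt⟩ := mem_sSup_iff.1 (principal_le_iff.1 hle)
  obtain ⟨I, hI, htI⟩ := DirectedOn.exists_mem_subset_of_finset_subset_biUnion hne hdir ht
  exact ⟨I, hI, principal_le_iff.2 (I.lower hxt ((finsetSup_mem_iff I).2 fun y hy => htI hy))⟩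

end SemilatticeSup

section DistribLattice

variable [DistribLattice P]

instance [OrderBot P] : Order.Frame (Ideal P) := .ofMinimalAxioms ⟨fun I S => by
  rintro x ⟨hxI, hxS⟩
  obtain ⟨t, ht, hxt⟩ := mem_sSup_iff.1 hxS
  have hx : x = t.sup (x ⊓ ·) := by
    rw [← Finset.sup_inf_distrib_left]
    exact (inf_eq_left.2 hxt).symm
  rw [hx]
  refine (finsetSup_mem_iff _).2 fun y hy => ?_
  obtain ⟨J, hJ, hyJ⟩ := Set.mem_iUnion₂.1 (ht hy)
  exact le_iSup₂ (f := fun J _ => I ⊓ J) J hJ ⟨I.lower inf_le_left hxI, J.lower inf_le_right hyJ⟩⟩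

variable [BoundedOrder P]

theorem isCompl_principal {a b : P} (h : IsCompl a b) : IsCompl (principal a) (principal b) := by
  refine ⟨disjoint_iff_inf_le.2 fun x hx => ?_, codisjoint_iff_le_sup.2 ?_⟩
  · rw [← principal_bot, mem_principal, ← h.inf_eq_bot]
    exact le_inf hx.1 hx.2
  · rw [← principal_top, principal_le_iff, mem_sup]
    exact ⟨a, mem_principal_self, b, mem_principal_self, h.sup_eq_top.ge⟩

theorem isStoneFrame [ComplementedLattice P] : IsStoneFrame (Ideal P) := by
  rw [isStoneFrame_iff, ← principal_top]
  refine ⟨isCompactElement_principal ⊤, fun I => le_antisymm (fun x hx => ?_)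
    (sSup_le fun _ hJ => hJ.1)⟩
  obtain ⟨y, hxy⟩ := exists_isCompl x
  have hx' : principal x ≤ sSup {J | J ≤ I ∧ IsComplemented J} :=
    le_sSup ⟨principal_le_iff.2 hx, _, isCompl_principal hxy⟩
  exact principal_le_iff.1 hx'

end DistribLattice

end Order.Ideal

section ComplementedsIdeals

variable {K K' L : Type*} [Order.Frame K] [Order.Frame K'] [Order.Frame L]

namespace Complementeds

def idealIic (a : L) : Order.Ideal (Complementeds L) :=
  Order.IsIdeal.toIdeal (I := {c | (c : L) ≤ a})
    ⟨fun _ _ hcd hd => le_trans hcd hd, ⟨⊥, bot_le⟩,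
      SupClosed.directedOn fun _ hc _ hd => sup_le hc hd⟩

theorem gc_iSup_idealIic :
    GaloisConnection (fun I : Order.Ideal (Complementeds L) => ⨆ c ∈ I, (c : L)) idealIic :=
  fun _ _ => iSup₂_le_iff

variable (L) in
def idealSupHom : FrameHom (Order.Ideal (Complementeds L)) L where
  toFun I := ⨆ c ∈ I, (c : L)
  map_inf' I J := by
    refine le_antisymm (le_inf (iSup₂_mono' fun c hc => ⟨c, hc.1, le_rfl⟩)
      (iSup₂_mono' fun c hc => ⟨c, hc.2, le_rfl⟩)) ?_
    simp only [iSup_inf_eq, inf_iSup_eq]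
    exact iSup₂_le fun d hd => iSup₂_le fun c hc =>
      le_iSup₂_of_le (c ⊓ d) ⟨I.lower inf_le_left hc, J.lower inf_le_right hd⟩ le_rfl
  map_top' := le_antisymm le_top (le_iSup₂_of_le ⊤ trivial le_rfl)
  map_sSup' S := by
    rw [sSup_image]
    exact GaloisConnection.l_sSup (α := Order.Ideal (Complementeds L)) gc_iSup_idealIic

end Complementeds

def FrameHom.complementedsIdeal (f : FrameHom K L) (a : K) : Order.Ideal (Complementeds L) :=
  Order.IsIdeal.toIdeal (I := {c | ∃ b : Complementeds K, (b : K) ≤ a ∧ (c : L) ≤ f b})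
    ⟨fun _ _ hcd ⟨b, hba, hdb⟩ => ⟨b, hba, le_trans hcd hdb⟩, ⟨⊥, ⊥, bot_le, bot_le⟩,
      SupClosed.directedOn fun _ ⟨b₁, hb₁a, hcb₁⟩ _ ⟨b₂, hb₂a, hdb₂⟩ =>
        ⟨b₁ ⊔ b₂, sup_le hb₁a hb₂a, by simpa using sup_le_sup hcb₁ hdb₂⟩⟩

@[simp]
theorem FrameHom.mem_complementedsIdeal {f : FrameHom K L} {a : K} {c : Complementeds L} :
    c ∈ f.complementedsIdeal a ↔ ∃ b : Complementeds K, (b : K) ≤ a ∧ (c : L) ≤ f b :=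
  Iff.rfl

namespace IsStoneFrame

def complementedsIdealHom (hK : IsStoneFrame K) (f : FrameHom K L) :
    FrameHom K (Order.Ideal (Complementeds L)) where
  toFun := f.complementedsIdeal
  map_inf' a₁ a₂ := SetLike.ext fun c => by
    simp only [FrameHom.mem_complementedsIdeal]
    refine ⟨fun ⟨b, hba, hcb⟩ =>
        ⟨⟨b, hba.trans inf_le_left, hcb⟩, ⟨b, hba.trans inf_le_right, hcb⟩⟩,
      fun ⟨⟨b₁, hb₁, hcb₁⟩, ⟨b₂, hb₂, hcb₂⟩⟩ => ⟨b₁ ⊓ b₂, inf_le_inf hb₁ hb₂, ?_⟩⟩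
    simpa using le_inf hcb₁ hcb₂
  map_top' := top_unique fun c _ => ⟨⊤, le_top, by simp⟩
  map_sSup' s := by
    refine le_antisymm (fun c ⟨b, hbs, hcb⟩ => ?_) (sSup_le fun _ ⟨a, ha, hJ⟩ =>
      hJ ▸ fun c ⟨b, hba, hcb⟩ => ⟨b, hba.trans (le_sSup ha), hcb⟩)
    set J := sSup (f.complementedsIdeal '' s)
    let D : Set K := {d | ∃ hd : IsComplemented d, (⟨f d, hd.map f⟩ : Complementeds L) ∈ J}
    have hD : SupClosed D := fun d₁ ⟨hd₁, h₁⟩ d₂ ⟨hd₂, h₂⟩ =>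
      ⟨hd₁.sup hd₂, by convert J.sup_mem h₁ h₂ using 1; exact Subtype.ext (map_sup f d₁ d₂)⟩
    have hsD : sSup s ≤ sSup D := sSup_le fun a ha => by
      rw [← hK.sSup_isComplemented_le_eq a]
      exact sSup_le_sSup fun d ⟨hda, hd⟩ =>
        ⟨hd, (le_sSup (Set.mem_image_of_mem _ ha) : f.complementedsIdeal a ≤ J)
          ⟨⟨d, hd⟩, hda, le_rfl⟩⟩
    obtain ⟨d, ⟨hd, hdJ⟩, hbd⟩ :=
      (CompleteLattice.isCompactElement_iff_le_of_directed_sSup_le _ _).1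
        (b.2.isCompactElement hK.1) D ⟨⊥, isComplemented_bot, J.lower (map_bot f).le J.bot_mem⟩
        hD.directedOn (hbs.trans hsD)
    exact J.lower (hcb.trans (OrderHomClass.mono f hbd)) hdJ

theorem idealSupHom_comp_complementedsIdealHom (hK : IsStoneFrame K) (f : FrameHom K L) :
    (Complementeds.idealSupHom L).comp (hK.complementedsIdealHom f) = f := by
  refine FrameHom.ext fun a => le_antisymm
    (iSup₂_le fun c ⟨b, hba, hcb⟩ => hcb.trans (OrderHomClass.mono f hba)) ?_
  conv_lhs => rw [← hK.sSup_isComplemented_le_eq a, map_sSup]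
  refine sSup_le ?_
  rintro _ ⟨d, ⟨hda, hd⟩, rfl⟩
  exact le_iSup₂_of_le (⟨f d, hd.map f⟩ : Complementeds L) ⟨⟨d, hd⟩, hda, le_rfl⟩ le_rfl

theorem complementedsIdealHom_comp (hK : IsStoneFrame K) (hK' : IsStoneFrame K')
    (f : FrameHom K L) (g : FrameHom K' K) :
    (hK.complementedsIdealHom f).comp g = hK'.complementedsIdealHom (f.comp g) := by
  refine FrameHom.ext fun a => SetLike.ext fun c => ?_
  change c ∈ f.complementedsIdeal (g a) ↔ c ∈ (f.comp g).complementedsIdeal a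
  simp only [FrameHom.mem_complementedsIdeal, FrameHom.comp_apply]
  refine ⟨fun ⟨b, hba, hcb⟩ => ?_,
    fun ⟨b, hba, hcb⟩ => ⟨⟨g b, b.2.map g⟩, OrderHomClass.mono g hba, hcb⟩⟩
  have hC : SupClosed {d | d ≤ a ∧ IsComplemented d} :=
    fun _ ⟨h₁a, h₁⟩ _ ⟨h₂a, h₂⟩ => ⟨sup_le h₁a h₂a, h₁.sup h₂⟩
  rw [← hK'.sSup_isComplemented_le_eq a, map_sSup] at hba
  obtain ⟨_, ⟨d, ⟨hda, hd⟩, rfl⟩, hbd⟩ :=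
    (CompleteLattice.isCompactElement_iff_le_of_directed_sSup_le _ _).1
      (b.2.isCompactElement hK.1) (g '' {d | d ≤ a ∧ IsComplemented d})
      ⟨g ⊥, ⊥, ⟨bot_le, isComplemented_bot⟩, rfl⟩ (hC.image g).directedOn hba
  exact ⟨⟨d, hd⟩, hda, hcb.trans (OrderHomClass.mono f hbd)⟩

end IsStoneFrame

end ComplementedsIdeals

namespace CategoryTheory.Limits

universe u

variable {J : Type*} [SmallCategory J] {F : J ⥤ Locale.{u}}

abbrev Cone.frameHom (c : Cone F) (j : J) : FrameHom (F.obj j).unop c.pt.unop :=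
  (c.π.app j).unop.hom

theorem Cone.frameHom_comp_map (c : Cone F) {j j' : J} (f : j ⟶ j') :
    (c.frameHom j).comp (F.map f).unop.hom = c.frameHom j' :=
  congrArg (fun g => g.unop.hom) (c.w f)

variable {M : Type u} [Order.Frame M] (ψ : ∀ j, FrameHom (F.obj j).unop M)
  (hψ : ∀ ⦃j j' : J⦄ (f : j ⟶ j'), (ψ j).comp (F.map f).unop.hom = ψ j')

def coneOfFrameHoms : Cone F where
  pt := Opposite.op (Frm.of M)
  π :=
    { app j := (Frm.ofHom (ψ j)).op
      naturality _ _ f :=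
        Quiver.Hom.unop_inj (Frm.ext fun x => (DFunLike.congr_fun (hψ f) x).symm) }

variable {c : Cone F}

def IsLimit.liftFrameHom (hc : IsLimit c) : FrameHom c.pt.unop M :=
  (hc.lift (coneOfFrameHoms ψ hψ)).unop.hom

theorem IsLimit.liftFrameHom_comp (hc : IsLimit c) (j : J) :
    (hc.liftFrameHom ψ hψ).comp (c.frameHom j) = ψ j :=
  congrArg (fun g => g.unop.hom) (hc.fac (coneOfFrameHoms ψ hψ) j)

theorem IsLimit.frameHom_ext (hc : IsLimit c) {g₁ g₂ : FrameHom c.pt.unop M}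
    (h : ∀ j, g₁.comp (c.frameHom j) = g₂.comp (c.frameHom j)) : g₁ = g₂ :=
  congrArg (fun g => g.unop.hom) <| hc.hom_ext (W := Opposite.op (Frm.of M))
    (f := (Frm.ofHom g₁).op) (f' := (Frm.ofHom g₂).op)
    fun j => Quiver.Hom.unop_inj (Frm.hom_ext (h j))

end CategoryTheory.Limits

/-- Stone locales are closed under limits in the category of locales: the apex of any limit
cone over a diagram of Stone locales is again a Stone locale. -/
theorem stone_closed_under_limits {J : Type*} [SmallCategory J]
    (F : J ⥤ Locale)
    (hstone : ∀ j : J, IsStoneFrame ↥(F.obj j).unop)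
    (c : Cone F) (hc : IsLimit c) :
    IsStoneFrame ↥c.pt.unop := by
  let h := hc.liftFrameHom (M := Order.Ideal (Complementeds c.pt.unop))
    (fun j => (hstone j).complementedsIdealHom (c.frameHom j))
    fun j j' f => by rw [IsStoneFrame.complementedsIdealHom_comp, c.frameHom_comp_map]
  have hretract : (Complementeds.idealSupHom c.pt.unop).comp h = FrameHom.id _ :=
    hc.frameHom_ext fun j => by
      rw [FrameHom.comp_assoc, hc.liftFrameHom_comp,
        IsStoneFrame.idealSupHom_comp_complementedsIdealHom, FrameHom.id_comp]
  exact Order.Ideal.isStoneFrame.of_leftInverse h (Complementeds.idealSupHom _)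
    (DFunLike.congr_fun hretract)
end

section
/- Let J be a small category and F : J ⥤ Locale a diagram such that: for every object j the frame underlying F(j) is coherent, meaning its top element is a compact element, the meet of any two compact elements is compact, and every element is a join of compact elements; and for every morphism of J the corresponding frame homomorphism maps compact elements to compact elements. If c is a limit cone over F in Locale, then the frame underlying the apex of c is coherent. -/
open CategoryTheory CategoryTheory.Limits

/-- A *coherent frame*: the top element is compact, the meet of two compact elements is
compact, and every element is a join of compact elements. -/
def IsCoherentFrame (L : Type*) [Order.Frame L] : Prop :=
  IsCompactElement (⊤ : L) ∧
  (∀ a b : L, IsCompactElement a → IsCompactElement b →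
    IsCompactElement (a ⊓ b)) ∧
  ∀ a : L, a = sSup {b | b ≤ a ∧ IsCompactElement b}

/-- The frame homomorphism underlying a morphism of locales. -/
def frameHomOfLocaleHom {X Y : Locale} (f : X ⟶ Y) : FrameHom ↥Y.unop ↥X.unop :=
  f.unop.hom

/-!
Let `L` be the apex and `C` the sublattice of `L` generated by the images of the compact elements
of the frames `F j`. Sending `a : F j` to the ideal of `C` generated by the images of the compact
elements below `a` is a frame homomorphism `F j → C.Ideal` because `F j` is coherent, and these
homomorphisms are compatible with the diagram because the transition maps preserve compactness.
By uniqueness in the universal property, the induced `u : L → C.Ideal` is a section of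
`sSup : C.Ideal → L`. As `x ∈ u x` for `x ∈ C` and directed joins of ideals are unions, every
element of `C` is compact; a compact `k` lies below some element of the directed set
`u k ⊆ C ∩ Iic k`, hence `k ∈ C`; and every `a = sSup (u a)` is a join of elements of `C`.
-/

namespace Sublattice

variable {L : Type*} [DistribLattice L] [OrderBot L] (C : Sublattice L)

-- Down-closure in `C` and closure under finite joins as one axiom, which does not need `⊥ ∈ C`
-- (when `⊥ ∉ C`, the empty set is an ideal).
structure Ideal where
  carrier : Set L
  subset : carrier ⊆ C
  mem_of_le_finsetSup :
    ∀ t : Finset L, ↑t ⊆ carrier → ∀ x ∈ C, x ≤ t.sup id → x ∈ carrier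

namespace Ideal

variable {C}

instance : SetLike C.Ideal L where
  coe := carrier
  coe_injective I K h := by cases I; cases K; congr

instance : PartialOrder C.Ideal := .ofSetLike C.Ideal L

variable (I : C.Ideal) {x y : L}

lemma mem_sublattice (hx : x ∈ I) : x ∈ C := I.subset hx

lemma mem_of_le_finsetSup' {ι : Type*} {t : Finset ι} {f : ι → L} (hf : ∀ i ∈ t, f i ∈ I)
    (hx : x ∈ C) (hxt : x ≤ t.sup f) : x ∈ I := by
  classical
  refine I.mem_of_le_finsetSup (t.image f) ?_ x hx (by rwa [Finset.sup_image])
  intro y hy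
  obtain ⟨i, hi, rfl⟩ := Finset.mem_image.mp hy
  exact hf i hi

lemma mem_of_le (hx : x ∈ C) (hy : y ∈ I) (hxy : x ≤ y) : x ∈ I :=
  I.mem_of_le_finsetSup' (t := {y}) (f := id) (by simpa) hx (by simpa)

lemma sup_mem (hx : x ∈ I) (hy : y ∈ I) : x ⊔ y ∈ I := by
  classical
  exact I.mem_of_le_finsetSup' (t := {x, y}) (f := id) (by simp [hx, hy])
    (C.sup_mem (I.mem_sublattice hx) (I.mem_sublattice hy)) (by simp)

lemma bot_mem (hC : ⊥ ∈ C) : ⊥ ∈ I :=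
  I.mem_of_le_finsetSup' (t := (∅ : Finset L)) (f := id) (by simp) hC le_rfl

lemma directedOn : DirectedOn (· ≤ ·) (I : Set L) :=
  fun x hx y hy => ⟨x ⊔ y, I.sup_mem hx hy, le_sup_left, le_sup_right⟩

variable (C) in
def span (S : Set L) : C.Ideal where
  carrier := {x | x ∈ C ∧ ∃ t : Finset L, ↑t ⊆ S ∧ x ≤ t.sup id}
  subset _ hx := hx.1
  mem_of_le_finsetSup t ht x hx hxt := by
    classical
    obtain ⟨s, hs, hts⟩ : ∃ s : Finset L, ↑s ⊆ S ∧ t.sup id ≤ s.sup id := by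
      refine Finset.sup_mem {y | ∃ s : Finset L, (s : Set L) ⊆ S ∧ y ≤ s.sup id}
        ⟨∅, by simp, bot_le⟩ ?_ t id fun y hy => (ht hy).2
      rintro _ ⟨s, hs, hys⟩ _ ⟨r, hr, hzr⟩
      exact ⟨s ∪ r, by simp [hs, hr], by rw [Finset.sup_union]; exact sup_le_sup hys hzr⟩
    exact ⟨hx, s, hs, hxt.trans hts⟩

lemma subset_span {S : Set L} (hS : S ⊆ C) : S ⊆ span C S :=
  fun x hx => ⟨hS hx, {x}, by simpa, by simp⟩

lemma span_mono {S T : Set L} (h : S ⊆ T) : span C S ≤ span C T :=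
  fun _ ⟨hx, t, ht, hxt⟩ => ⟨hx, t, ht.trans h, hxt⟩

lemma span_le {S : Set L} (h : S ⊆ I) : span C S ≤ I :=
  fun _ ⟨hx, t, ht, hxt⟩ => I.mem_of_le_finsetSup t (ht.trans h) _ hx hxt

instance : Min C.Ideal where
  min I K :=
    { carrier := I ∩ K
      subset := Set.inter_subset_left.trans I.subset
      mem_of_le_finsetSup := fun t ht x hx hxt =>
        ⟨I.mem_of_le_finsetSup t (ht.trans Set.inter_subset_left) x hx hxt,
          K.mem_of_le_finsetSup t (ht.trans Set.inter_subset_right) x hx hxt⟩ }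

instance : Top C.Ideal where
  top := ⟨C, subset_rfl, fun _ _ _ hx _ => hx⟩

instance : SupSet C.Ideal where
  sSup S := span C (⋃ I ∈ S, I)

lemma isLUB_sSup (S : Set C.Ideal) : IsLUB S (sSup S) :=
  ⟨fun _ hI => (subset_span (Set.iUnion₂_subset fun K _ => K.subset)).trans'
      (Set.subset_biUnion_of_mem (u := fun K : C.Ideal => (K : Set L)) hI),
    fun K hK => span_le K (Set.iUnion₂_subset hK)⟩

instance : CompleteLattice C.Ideal where
  __ := completeLatticeOfSup C.Ideal isLUB_sSup
  inf := (· ⊓ ·)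
  inf_le_left _ _ := Set.inter_subset_left
  inf_le_right _ _ := Set.inter_subset_right
  le_inf _ _ _ := Set.subset_inter
  top := ⊤
  le_top I := I.subset

lemma exists_mem_of_mem_sSup {S : Set C.Ideal} (hne : S.Nonempty) (hS : DirectedOn (· ≤ ·) S)
    (hx : x ∈ sSup S) : ∃ I ∈ S, x ∈ I := by
  obtain ⟨hxC, t, ht, hxt⟩ := hx
  obtain ⟨I, hI, htI⟩ :=
    (hS.mono fun _ _ h => h).exists_mem_subset_of_finset_subset_biUnion hne ht
  exact ⟨I, hI, I.mem_of_le_finsetSup t htI x hxC hxt⟩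

instance : Order.Frame C.Ideal :=
  .ofMinimalAxioms ⟨fun I S => by
    rintro x ⟨hxI, hxC, t, ht, hxt⟩
    have hx : x ≤ t.sup (x ⊓ ·) := by
      rw [← Finset.sup_inf_distrib_left]
      exact le_inf le_rfl hxt
    refine mem_of_le_finsetSup' _ (fun y hy => ?_) hxC hx
    obtain ⟨K, hK, hyK⟩ := Set.mem_iUnion₂.mp (ht hy)
    have hxy : x ⊓ y ∈ C := C.inf_mem hxC (K.mem_sublattice hyK)
    exact le_iSup₂ (f := fun K _ => I ⊓ K) K hK
      ⟨I.mem_of_le hxy hxI inf_le_left, K.mem_of_le hxy hyK inf_le_right⟩⟩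

end Ideal

end Sublattice

namespace Sublattice.Ideal

variable {L : Type*} [Order.Frame L] {C : Sublattice L} {x : L}

lemma sSup_span {S : Set L} (hS : S ⊆ C) : sSup (span C S : Set L) = sSup S :=
  le_antisymm
    (sSup_le fun _ ⟨_, _, ht, hxt⟩ => hxt.trans (Finset.sup_le fun _ hy => le_sSup (ht hy)))
    (sSup_le_sSup (subset_span hS))

variable (C) in
def sSupFrameHom (htop : ⊤ ∈ C) : FrameHom C.Ideal L where
  toFun I := sSup (I : Set L)
  map_inf' I K := by
    refine le_antisymm (le_inf (sSup_le_sSup inf_le_left) (sSup_le_sSup inf_le_right)) ?_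
    rw [sSup_inf_sSup]
    refine iSup₂_le fun ⟨x, y⟩ ⟨hx, hy⟩ => le_sSup (?_ : x ⊓ y ∈ I ⊓ K)
    have hxy := C.inf_mem (I.mem_sublattice hx) (K.mem_sublattice hy)
    exact ⟨I.mem_of_le hxy hx inf_le_left, K.mem_of_le hxy hy inf_le_right⟩
  map_top' := top_unique (le_sSup htop)
  map_sSup' S := by
    change sSup (span C (⋃ I ∈ S, (I : Set L))) =
      sSup ((fun I : C.Ideal => sSup (I : Set L)) '' S)
    rw [sSup_span (Set.iUnion₂_subset fun I _ => I.subset), sSup_image, sSup_iUnion]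
    simp_rw [sSup_iUnion]

section IdealSection

variable {u : FrameHom L C.Ideal} (hu : ∀ a, sSup (u a : Set L) = a)
include hu

lemma le_of_mem_apply {a : L} (hx : x ∈ u a) : x ≤ a :=
  hu a ▸ le_sSup hx

lemma isCompactElement_of_mem_apply_self (hx : x ∈ u x) : IsCompactElement x := by
  rw [CompleteLattice.isCompactElement_iff_le_of_directed_sSup_le]
  intro D hne hdir hxD
  have hx' : x ∈ sSup (u '' D) := by
    rw [← map_sSup]
    exact OrderHomClass.mono u hxD hx
  obtain ⟨_, ⟨d, hd, rfl⟩, hxd⟩ :=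
    exists_mem_of_mem_sSup (hne.image u) (hdir.mono_comp fun _ _ h => OrderHomClass.mono u h)
      hx'
  exact ⟨d, hd, le_of_mem_apply hu hxd⟩

lemma mem_of_isCompactElement (hbot : ⊥ ∈ C) (hx : IsCompactElement x) : x ∈ C := by
  obtain ⟨y, hy, hxy⟩ :=
    (CompleteLattice.isCompactElement_iff_le_of_directed_sSup_le _ x).mp hx
      (u x) ⟨⊥, (u x).bot_mem hbot⟩ (u x).directedOn (hu x).ge
  exact le_antisymm hxy (le_of_mem_apply hu hy) ▸ (u x).mem_sublattice hy

end IdealSection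

end Sublattice.Ideal

open Sublattice.Ideal

theorem IsCoherentFrame.of_ideal_section {L : Type*} [Order.Frame L] {C : Sublattice L}
    (hbot : ⊥ ∈ C) (htop : ⊤ ∈ C) {u : FrameHom L C.Ideal}
    (hu : ∀ a, sSup (u a : Set L) = a) (hmem : ∀ x ∈ C, x ∈ u x) : IsCoherentFrame L := by
  have hcompact : ∀ x ∈ C, IsCompactElement x :=
    fun x hx => isCompactElement_of_mem_apply_self hu (hmem x hx)
  refine ⟨hcompact ⊤ htop, fun a b ha hb => hcompact _ (C.inf_mem
    (mem_of_isCompactElement hu hbot ha) (mem_of_isCompactElement hu hbot hb)), fun a => ?_⟩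
  refine le_antisymm ?_ (sSup_le fun b hb => hb.1)
  conv_lhs => rw [← hu a]
  exact sSup_le_sSup fun x hx =>
    ⟨le_of_mem_apply hu hx, hcompact x ((u a).mem_sublattice hx)⟩

def selfMemSublattice {L : Type*} [Order.Frame L] {C : Sublattice L} (u : FrameHom L C.Ideal) :
    Sublattice L where
  carrier := {x | x ∈ u x}
  supClosed' x hx y hy := (u (x ⊔ y)).sup_mem (OrderHomClass.mono u le_sup_left hx)
    (OrderHomClass.mono u le_sup_right hy)
  infClosed' x hx y hy := by
    have hxy : x ⊓ y ∈ C := C.inf_mem ((u x).mem_sublattice hx) ((u y).mem_sublattice hy)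
    change x ⊓ y ∈ u (x ⊓ y)
    rw [map_inf]
    exact ⟨(u x).mem_of_le hxy hx inf_le_left, (u y).mem_of_le hxy hy inf_le_right⟩

lemma mem_selfMemSublattice {L : Type*} [Order.Frame L] {C : Sublattice L}
    {u : FrameHom L C.Ideal} {x : L} : x ∈ selfMemSublattice u ↔ x ∈ u x :=
  Iff.rfl

section CompactSpan

def compactsBelow {K : Type*} [PartialOrder K] (a : K) : Set K :=
  {b | b ≤ a ∧ IsCompactElement b}

lemma compactsBelow_mono {K : Type*} [PartialOrder K] {a b : K} (h : a ≤ b) :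
    compactsBelow a ⊆ compactsBelow b :=
  fun _ hk => ⟨hk.1.trans h, hk.2⟩

lemma IsCoherentFrame.sSup_compactsBelow {K : Type*} [Order.Frame K] (hK : IsCoherentFrame K)
    (a : K) : sSup (compactsBelow a) = a :=
  (hK.2.2 a).symm

variable {L K : Type*} [Order.Frame L] [Order.Frame K] {C : Sublattice L}

lemma Sublattice.Ideal.map_mem_span_image (p : FrameHom K L) {S : Set K} {k : K}
    (hk : IsCompactElement k) (hkS : k ≤ sSup S) (hpk : p k ∈ C) : p k ∈ span C (p '' S) := by
  classical
  obtain ⟨t, ht, hkt⟩ :=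
    (CompleteLattice.isCompactElement_iff_exists_le_sSup_of_le_sSup _ k).mp hk S hkS
  refine ⟨hpk, t.image p, by simpa using Set.image_mono ht, ?_⟩
  calc p k ≤ p (t.sup id) := OrderHomClass.mono p hkt
  _ = (t.image p).sup id := by rw [map_finset_sup, Finset.sup_image]; rfl

variable (hK : IsCoherentFrame K) (p : FrameHom K L) (hp : ∀ k, IsCompactElement k → p k ∈ C)
include hp

lemma image_compactsBelow_subset (a : K) : p '' compactsBelow a ⊆ C := by
  rintro _ ⟨k, hk, rfl⟩
  exact hp k hk.2

def compactSpanHom : FrameHom K C.Ideal where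
  toFun a := span C (p '' compactsBelow a)
  map_inf' a b := by
    classical
    refine le_antisymm (le_inf (span_mono (Set.image_mono (compactsBelow_mono inf_le_left)))
      (span_mono (Set.image_mono (compactsBelow_mono inf_le_right)))) ?_
    rintro x ⟨⟨hx, t, ht, hxt⟩, -, s, hs, hxs⟩
    refine mem_of_le_finsetSup' _ (t := t ×ˢ s) (f := fun q => q.1 ⊓ q.2) ?_ hx
      ((le_inf hxt hxs).trans_eq (Finset.sup_inf_sup t s id id))
    rintro ⟨y, z⟩ hyz
    rw [Finset.mem_product] at hyz
    obtain ⟨k, ⟨hka, hk⟩, rfl⟩ := ht hyz.1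
    obtain ⟨m, ⟨hmb, hm⟩, rfl⟩ := hs hyz.2
    change p k ⊓ p m ∈ _
    rw [← map_inf]
    exact subset_span (image_compactsBelow_subset p hp _)
      ⟨k ⊓ m, ⟨inf_le_inf hka hmb, hK.2.1 k m hk hm⟩, rfl⟩
  map_top' := top_unique fun x hx => (span C _).mem_of_le hx
    (subset_span (image_compactsBelow_subset p hp _) ⟨⊤, ⟨le_rfl, hK.1⟩, rfl⟩)
    (map_top p ▸ le_top)
  map_sSup' A := by
    refine le_antisymm (span_le _ ?_) (sSup_le ?_)
    · rintro _ ⟨k, ⟨hkA, hk⟩, rfl⟩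
      have hkA' : k ≤ sSup (⋃ a ∈ A, compactsBelow a) := hkA.trans <| sSup_le fun a ha =>
        (hK.sSup_compactsBelow a).symm.trans_le
          (sSup_le_sSup (Set.subset_biUnion_of_mem (u := compactsBelow) ha))
      refine span_le _ ?_ (map_mem_span_image p hk hkA' (hp k hk))
      rintro _ ⟨m, hm, rfl⟩
      obtain ⟨a, ha, hma⟩ := Set.mem_iUnion₂.mp hm
      exact le_sSup (Set.mem_image_of_mem (fun a => span C (p '' compactsBelow a)) ha)
        (subset_span (image_compactsBelow_subset p hp a) (Set.mem_image_of_mem p hma))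
    · rintro _ ⟨a, ha, rfl⟩
      exact span_mono (Set.image_mono (compactsBelow_mono (le_sSup ha)))

lemma mem_compactSpanHom_self {k : K} (hk : IsCompactElement k) :
    p k ∈ compactSpanHom hK p hp k :=
  subset_span (image_compactsBelow_subset p hp k) ⟨k, ⟨le_rfl, hk⟩, rfl⟩

lemma sSupFrameHom_comp_compactSpanHom (htop : ⊤ ∈ C) :
    (sSupFrameHom C htop).comp (compactSpanHom hK p hp) = p := by
  ext a
  change sSup (span C (p '' compactsBelow a) : Set L) = p a
  rw [sSup_span (image_compactsBelow_subset p hp a), ← map_sSup, hK.sSup_compactsBelow]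

lemma compactSpanHom_comp {K' : Type*} [Order.Frame K'] (hK' : IsCoherentFrame K')
    {g : FrameHom K' K} (hg : ∀ k, IsCompactElement k → IsCompactElement (g k))
    {p' : FrameHom K' L} (hp' : ∀ k, IsCompactElement k → p' k ∈ C) (hpg : p.comp g = p') :
    (compactSpanHom hK p hp).comp g = compactSpanHom hK' p' hp' := by
  subst hpg
  ext b
  refine le_antisymm (span_le _ ?_) (span_mono ?_)
  · rintro _ ⟨k, ⟨hkb, hk⟩, rfl⟩
    have hkb' : k ≤ sSup (g '' compactsBelow b) := by rwa [← map_sSup, hK'.sSup_compactsBelow]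
    have hpk := map_mem_span_image p hk hkb' (hp k hk)
    rwa [Set.image_image] at hpk
  · rintro _ ⟨m, ⟨hmb, hm⟩, rfl⟩
    exact ⟨g m, ⟨OrderHomClass.mono g hmb, hg m hm⟩, rfl⟩

end CompactSpan

lemma frameHomOfLocaleHom_comp {X Y Z : Locale} (f : X ⟶ Y) (g : Y ⟶ Z) :
    frameHomOfLocaleHom (f ≫ g) = (frameHomOfLocaleHom f).comp (frameHomOfLocaleHom g) :=
  rfl

lemma frameHomOfLocaleHom_injective {X Y : Locale} :
    Function.Injective (frameHomOfLocaleHom : (X ⟶ Y) → _) :=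
  fun _ _ h => Quiver.Hom.unop_inj (Frm.hom_ext h)

universe u

section LimitFrameHom

variable {J : Type*} [SmallCategory J] {F : J ⥤ Locale.{u}} {c : Cone F} {M : Type u}
  [Order.Frame M]

lemma CategoryTheory.Limits.IsLimit.frameHom_ext_s14 (hc : IsLimit c)
    {g g' : FrameHom c.pt.unop M} (h : ∀ j, g.comp (frameHomOfLocaleHom (c.π.app j)) =
      g'.comp (frameHomOfLocaleHom (c.π.app j))) : g = g' :=
  congrArg frameHomOfLocaleHom <| hc.hom_ext (W := Locale.of M)
    (f := (Frm.ofHom g).op) (f' := (Frm.ofHom g').op)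
    fun j => frameHomOfLocaleHom_injective (h j)

lemma CategoryTheory.Limits.IsLimit.exists_frameHom_comp_eq (hc : IsLimit c)
    (f : ∀ j, FrameHom (F.obj j).unop M)
    (hf : ∀ {j j' : J} (φ : j ⟶ j'), (f j).comp (frameHomOfLocaleHom (F.map φ)) = f j') :
    ∃ u : FrameHom c.pt.unop M, ∀ j, u.comp (frameHomOfLocaleHom (c.π.app j)) = f j :=
  let cone : Cone F :=
    { pt := Locale.of M
      π := { app j := (Frm.ofHom (f j)).op
             naturality _ _ φ := frameHomOfLocaleHom_injective (hf φ).symm } }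
  ⟨frameHomOfLocaleHom (hc.lift cone), fun j => congrArg frameHomOfLocaleHom (hc.fac cone j)⟩

end LimitFrameHom

section CompactImages

variable {J : Type*} [SmallCategory J] {F : J ⥤ Locale} (c : Cone F)

-- `⊥` and `⊤` are generators: they are images of compact elements only if `J` is nonempty.
def compactImageSublattice : Sublattice c.pt.unop :=
  sInf {D | insert ⊥ (insert ⊤
    (⋃ j, frameHomOfLocaleHom (c.π.app j) '' {k | IsCompactElement k})) ⊆ (D : Set c.pt.unop)}

lemma compactImageSublattice_le {D : Sublattice c.pt.unop} (hbot : ⊥ ∈ D) (htop : ⊤ ∈ D)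
    (hgen : ∀ j k, IsCompactElement k → frameHomOfLocaleHom (c.π.app j) k ∈ D) :
    compactImageSublattice c ≤ D :=
  sInf_le <| Set.insert_subset hbot <| Set.insert_subset htop <| Set.iUnion_subset fun j => by
    rintro _ ⟨k, hk, rfl⟩
    exact hgen j k hk

variable {c}

lemma bot_mem_compactImageSublattice : ⊥ ∈ compactImageSublattice c :=
  Sublattice.mem_sInf.mpr fun _ hD => hD (Set.mem_insert _ _)

lemma top_mem_compactImageSublattice : ⊤ ∈ compactImageSublattice c :=
  Sublattice.mem_sInf.mpr fun _ hD => hD (Set.mem_insert_of_mem _ (Set.mem_insert _ _))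

lemma map_mem_compactImageSublattice {j : J} {k : (F.obj j).unop} (hk : IsCompactElement k) :
    frameHomOfLocaleHom (c.π.app j) k ∈ compactImageSublattice c :=
  Sublattice.mem_sInf.mpr fun _ hD => hD <|
    Set.mem_insert_of_mem _ (Set.mem_insert_of_mem _ (Set.mem_iUnion_of_mem j ⟨k, hk, rfl⟩))

end CompactImages

/-- A limit of coherent locales along coherent maps is coherent: if every locale in a diagram
is coherent and every frame homomorphism underlying a morphism of the diagram maps compact
elements to compact elements, then the apex of any limit cone is a coherent locale. -/
theorem coherent_closed_under_limits {J : Type*} [SmallCategory J]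
    (F : J ⥤ Locale)
    (hcoh : ∀ j : J, IsCoherentFrame ↥(F.obj j).unop)
    (hmap : ∀ {j j' : J} (φ : j ⟶ j') (k : ↥(F.obj j').unop),
      IsCompactElement k →
      IsCompactElement (frameHomOfLocaleHom (F.map φ) k))
    (c : Cone F) (hc : IsLimit c) :
    IsCoherentFrame ↥c.pt.unop := by
  have hp (j) : ∀ k, IsCompactElement k →
      frameHomOfLocaleHom (c.π.app j) k ∈ compactImageSublattice c :=
    fun _ => map_mem_compactImageSublattice
  obtain ⟨u, hu⟩ := hc.exists_frameHom_comp_eq (fun j => compactSpanHom (hcoh j) _ (hp j))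
    fun φ => compactSpanHom_comp _ _ _ (hcoh _) (hmap φ) _
      (by rw [← frameHomOfLocaleHom_comp, c.w])
  have hsec : (sSupFrameHom _ top_mem_compactImageSublattice).comp u = FrameHom.id _ :=
    hc.frameHom_ext_s14 fun j => by
      rw [FrameHom.comp_assoc, hu j, sSupFrameHom_comp_compactSpanHom]
      rfl
  have hmem : compactImageSublattice c ≤ selfMemSublattice u := compactImageSublattice_le c
    ((u ⊥).bot_mem bot_mem_compactImageSublattice)
    (mem_selfMemSublattice.mpr (by rw [map_top]; exact top_mem_compactImageSublattice))
    fun j k hk => mem_selfMemSublattice.mpr <| by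
      rw [← FrameHom.comp_apply, hu j]
      exact mem_compactSpanHom_self (hcoh j) _ (hp j) hk
  exact IsCoherentFrame.of_ideal_section bot_mem_compactImageSublattice
    top_mem_compactImageSublattice (DFunLike.congr_fun hsec) fun _ hx => hmem hx
end
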